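/- There exists a constant c > 1 such that for all ε ∈ (0, 1/2), with L(ε) = ⌈log₂(ε^{-2}) + log₂(log₂(ε^{-2}))⌉ and N_ℓ(ε) = ⌈(L(ε)+1) · 2^{-ℓ} · max(ℓ,1) · ε^{-2}⌉ for ℓ = 0,…,L(ε), one has c^{-1} · ε^{-2} · (ln(ε^{-1}))³ ≤ ∑_{ℓ=0}^{L(ε)} N_ℓ(ε) · 2^ℓ ≤ c · ε^{-2} · (ln(ε^{-1}))³. -/
import Mathlib

/-- Maximal level `L(ε) = ⌈log₂(ε⁻²) + log₂(log₂(ε⁻²))⌉`. -/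
noncomputable def Lfun (ε : ℝ) : ℕ :=
  ⌈Real.logb 2 (ε⁻¹ ^ 2) + Real.logb 2 (Real.logb 2 (ε⁻¹ ^ 2))⌉₊

/-- Replication numbers `N_ℓ(ε) = ⌈(L(ε)+1) · 2^{-ℓ} · max(ℓ,1) · ε⁻²⌉`. -/
noncomputable def Nfun (ε : ℝ) (ℓ : ℕ) : ℕ :=
  ⌈((Lfun ε : ℝ) + 1) * (2 : ℝ)⁻¹ ^ ℓ * (max ℓ 1 : ℕ) * ε⁻¹ ^ 2⌉₊

set_option maxHeartbeats 1600000 in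
/-- Cost estimate for the multilevel Euler algorithm:
`∑_{ℓ=0}^{L(ε)} N_ℓ(ε)·2^ℓ ≍ ε⁻²·(ln ε⁻¹)³`. -/
theorem stmt_8 :
    ∃ c : ℝ, 1 < c ∧ ∀ ε : ℝ, ε ∈ Set.Ioo (0 : ℝ) (1 / 2) →
      c⁻¹ * ε⁻¹ ^ 2 * Real.log ε⁻¹ ^ 3 ≤
          ∑ ℓ ∈ Finset.range (Lfun ε + 1), (Nfun ε ℓ : ℝ) * 2 ^ ℓ ∧
        ∑ ℓ ∈ Finset.range (Lfun ε + 1), (Nfun ε ℓ : ℝ) * 2 ^ ℓ ≤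
          c * ε⁻¹ ^ 2 * Real.log ε⁻¹ ^ 3 := by
  refine ⟨2000, by norm_num, fun ε hε => ?_⟩
  obtain ⟨hε0, hεh⟩ := hε
  have hu2 : (2:ℝ) < ε⁻¹ := by
    rw [show (2:ℝ) = (1/2)⁻¹ by norm_num]
    exact (inv_lt_inv₀ (by norm_num) hε0).mpr hεh
  have hu0 : (0:ℝ) < ε⁻¹ := by linarith
  set m : ℝ := Real.log ε⁻¹ with hm_def
  set l2 : ℝ := Real.log 2 with hl2_def
  have hl2a : 0.6931471803 < l2 := Real.log_two_gt_d9
  have hl2b : l2 < 0.6931471808 := Real.log_two_lt_d9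
  have hl2pos : 0 < l2 := by linarith
  have hm : l2 ≤ m := Real.log_le_log (by norm_num) hu2.le
  have hmpos : 0 < m := lt_of_lt_of_le hl2pos hm
  set x : ℝ := ε⁻¹ ^ 2 with hx_def
  have hx0 : 0 < x := by positivity
  set b : ℝ := Real.logb 2 x with hb_def
  have hlogx : Real.log x = 2 * m := by
    rw [hx_def, Real.log_pow]; push_cast; ring
  have hbl : b * l2 = 2 * m := by
    rw [hb_def, Real.logb, div_mul_cancel₀ _ (ne_of_gt hl2pos), hlogx]
  have hb2 : 2 ≤ b := by nlinarith [hbl, hm, hl2pos]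
  have hbpos : 0 < b := by linarith
  set a : ℝ := b + Real.logb 2 b with ha_def
  have hlogb_nonneg : 0 ≤ Real.logb 2 b := Real.logb_nonneg one_lt_two (by linarith)
  have ha_nonneg : 0 ≤ a := by positivity
  have hab : b ≤ a := by rw [ha_def]; linarith [hlogb_nonneg]
  set L : ℕ := Lfun ε with hL_def
  have hLa : a ≤ (L : ℝ) := Nat.le_ceil a
  have hLb : (L : ℝ) < a + 1 := Nat.ceil_lt_add_one ha_nonneg
  set k : ℝ := (L : ℝ) with hk_def
  have hNceil1 : ∀ ℓ : ℕ, (k + 1) * (2:ℝ)⁻¹ ^ ℓ * (max ℓ 1 : ℕ) * x ≤ (Nfun ε ℓ : ℝ) :=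
    fun ℓ => Nat.le_ceil _
  have hNceil2 : ∀ ℓ : ℕ, (Nfun ε ℓ : ℝ) ≤ (k + 1) * (2:ℝ)⁻¹ ^ ℓ * (max ℓ 1 : ℕ) * x + 1 :=
    fun ℓ => (Nat.ceil_lt_add_one (by positivity)).le
  clear_value k a b x m l2
  clear_value L
  have hk2 : 2 ≤ k := le_trans hb2 (le_trans hab hLa)
  have hkm : 2 * m ≤ k := by
    nlinarith [hbl, mul_le_mul_of_nonneg_left (by linarith : l2 ≤ 1) hbpos.le,
      le_trans hab hLa]
  -- upper bound on k + 1
  have hkub : k + 1 ≤ 3.5 * b := by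
    have hlogbb : Real.logb 2 b ≤ b / l2 := by
      rw [Real.logb, ← hl2_def]
      exact div_le_div_of_nonneg_right (Real.log_le_self hbpos.le) hl2pos.le
    have hdiv : b / l2 ≤ 1.45 * b := by
      rw [div_le_iff₀ hl2pos]
      nlinarith [hbpos.le, hl2a]
    have hstep : k + 1 < b + 1.45 * b + 2 := by
      have h1 := hLb
      rw [ha_def] at h1
      linarith
    linarith
  -- lower bound part
  have hNge : ∀ ℓ ∈ Finset.range (L + 1), (k + 1) * (ℓ:ℝ) * x ≤ (Nfun ε ℓ : ℝ) * 2 ^ ℓ := by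
    intro ℓ _
    have hceil := hNceil1 ℓ
    have hmax : (ℓ:ℝ) ≤ ((max ℓ 1 : ℕ) : ℝ) := by exact_mod_cast le_max_left ℓ 1
    have hpow : (2:ℝ)⁻¹ ^ ℓ * 2 ^ ℓ = 1 := by rw [← mul_pow]; norm_num
    have h1 : (k + 1) * (ℓ:ℝ) * x = ((k + 1) * (2 : ℝ)⁻¹ ^ ℓ * (ℓ:ℝ) * x) * 2 ^ ℓ := by
      calc (k + 1) * (ℓ:ℝ) * x = (k + 1) * (ℓ:ℝ) * x * ((2:ℝ)⁻¹ ^ ℓ * 2 ^ ℓ) := by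
            rw [hpow]; ring
        _ = ((k + 1) * (2 : ℝ)⁻¹ ^ ℓ * (ℓ:ℝ) * x) * 2 ^ ℓ := by ring
    rw [h1]
    have h2 : ((k + 1) * (2 : ℝ)⁻¹ ^ ℓ * (ℓ:ℝ) * x) ≤ (k + 1) * (2 : ℝ)⁻¹ ^ ℓ * (max ℓ 1 : ℕ) * x := by
      have hk1 : (0:ℝ) ≤ (k + 1) * (2:ℝ)⁻¹ ^ ℓ := mul_nonneg (by linarith) (by positivity)
      exact mul_le_mul_of_nonneg_right (mul_le_mul_of_nonneg_left hmax hk1) hx0.le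
    have h3 : (0:ℝ) ≤ (2:ℝ)^ℓ := by positivity
    exact mul_le_mul_of_nonneg_right (le_trans h2 hceil) h3
  have hsum_id : ∑ ℓ ∈ Finset.range (L + 1), (ℓ:ℝ) = k * (k + 1) / 2 := by
    have h := Finset.sum_range_id_mul_two (L + 1)
    have h2 : ((∑ i ∈ Finset.range (L + 1), i : ℕ) : ℝ) * 2 = ((L:ℝ) + 1) * (L:ℝ) := by
      exact_mod_cast congrArg (Nat.cast (R := ℝ)) h
    push_cast at h2
    rw [hk_def]
    linarith
  constructor
  · -- lower bound
    have hm3 : (2*m) ^ 3 ≤ k ^ 3 := pow_le_pow_left₀ (by positivity) hkm 3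
    have hA : (2000:ℝ)⁻¹ * m ^ 3 ≤ (k + 1) * (k * (k + 1) / 2) := by
      nlinarith [hm3, hk2, hmpos.le, sq_nonneg (k + 1), sq_nonneg k]
    calc (2000:ℝ)⁻¹ * x * m ^ 3 ≤ (k + 1) * x * (k * (k + 1) / 2) := by
          have h5 := mul_le_mul_of_nonneg_right hA hx0.le
          nlinarith [h5]
      _ = ∑ ℓ ∈ Finset.range (L + 1), (k + 1) * (ℓ:ℝ) * x := by
          rw [show ∑ ℓ ∈ Finset.range (L + 1), (k + 1) * (ℓ:ℝ) * x
              = (k + 1) * x * ∑ ℓ ∈ Finset.range (L + 1), (ℓ:ℝ) by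
            rw [Finset.mul_sum]; exact Finset.sum_congr rfl (fun ℓ _ => by ring)]
          rw [hsum_id]
      _ ≤ _ := Finset.sum_le_sum hNge
  · -- upper bound
    have hNle : ∀ ℓ ∈ Finset.range (L + 1),
        (Nfun ε ℓ : ℝ) * 2 ^ ℓ ≤ (k + 1) ^ 2 * x + 2 ^ ℓ := by
      intro ℓ hℓ
      have hℓL : ℓ ≤ L := Nat.lt_succ_iff.mp (Finset.mem_range.mp hℓ)
      have hmax : ((max ℓ 1 : ℕ) : ℝ) ≤ k + 1 := by
        have h : max ℓ 1 ≤ L + 1 := max_le (le_trans hℓL (Nat.le_succ L)) (by omega)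
        rw [hk_def]
        exact_mod_cast h
      have hceil := hNceil2 ℓ
      have hpow : (2:ℝ)⁻¹ ^ ℓ * 2 ^ ℓ = 1 := by rw [← mul_pow]; norm_num
      have h3 : (0:ℝ) ≤ (2:ℝ)^ℓ := by positivity
      have hmaxnn : (0:ℝ) ≤ ((max ℓ 1 : ℕ) : ℝ) := by positivity
      calc (Nfun ε ℓ : ℝ) * 2 ^ ℓ
          ≤ ((k + 1) * (2 : ℝ)⁻¹ ^ ℓ * (max ℓ 1 : ℕ) * x + 1) * 2 ^ ℓ :=
            mul_le_mul_of_nonneg_right hceil h3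
        _ = (k + 1) * ((max ℓ 1 : ℕ) : ℝ) * x * ((2:ℝ)⁻¹ ^ ℓ * 2 ^ ℓ) + 2 ^ ℓ := by ring
        _ = (k + 1) * ((max ℓ 1 : ℕ) : ℝ) * x + 2 ^ ℓ := by rw [hpow]; ring
        _ ≤ (k + 1) ^ 2 * x + 2 ^ ℓ := by
            have h4 := mul_le_mul_of_nonneg_right
              (mul_le_mul_of_nonneg_left hmax (by linarith : (0:ℝ) ≤ k + 1)) hx0.le
            nlinarith [h4]
    have hgeom : ∑ ℓ ∈ Finset.range (L + 1), (2:ℝ) ^ ℓ = 2 ^ (L + 1) - 1 := by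
      rw [geom_sum_eq (by norm_num) (L + 1)]; norm_num
    have hsumub : ∑ ℓ ∈ Finset.range (L + 1), (Nfun ε ℓ : ℝ) * 2 ^ ℓ
        ≤ (k + 1) ^ 3 * x + 2 ^ (L + 1) := by
      calc ∑ ℓ ∈ Finset.range (L + 1), (Nfun ε ℓ : ℝ) * 2 ^ ℓ
          ≤ ∑ ℓ ∈ Finset.range (L + 1), ((k + 1) ^ 2 * x + 2 ^ ℓ) := Finset.sum_le_sum hNle
        _ = ((L:ℝ) + 1) * ((k + 1) ^ 2 * x) + (2 ^ (L + 1) - 1) := by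
            rw [Finset.sum_add_distrib, Finset.sum_const, Finset.card_range, hgeom]
            push_cast; ring
        _ ≤ (k + 1) ^ 3 * x + 2 ^ (L + 1) := by
            rw [show ((L:ℝ) + 1) = k + 1 by rw [hk_def]]
            nlinarith [hx0.le]
    have hp2 : (2:ℝ) ^ (L + 1) ≤ 4 * x * b := by
      have e1 : (2:ℝ) ^ (L + 1) = (2:ℝ) ^ (((L + 1 : ℕ)):ℝ) := (Real.rpow_natCast 2 (L+1)).symm
      have e2 : (2:ℝ) ^ (((L + 1 : ℕ)):ℝ) ≤ (2:ℝ) ^ (a + 2) := by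
        apply Real.rpow_le_rpow_of_exponent_le one_le_two
        push_cast [hk_def] at hLb ⊢
        linarith [hLb]
      have e3 : (2:ℝ) ^ (a + 2) = x * b * 4 := by
        rw [ha_def, Real.rpow_add two_pos, Real.rpow_add two_pos,
          Real.rpow_logb two_pos (by norm_num) hbpos]
        rw [hb_def, Real.rpow_logb two_pos (by norm_num) hx0]
        rw [show (2:ℝ) ^ (2:ℝ) = 4 by
          rw [show (2:ℝ) = ((2:ℕ):ℝ) from by norm_num, Real.rpow_natCast]; norm_num]
      calc (2:ℝ) ^ (L + 1) = (2:ℝ) ^ (((L + 1 : ℕ)):ℝ) := e1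
        _ ≤ (2:ℝ) ^ (a + 2) := e2
        _ = x * b * 4 := e3
        _ = 4 * x * b := by ring
    have hk3 : (k + 1) ^ 3 ≤ 42.875 * b ^ 3 := by
      have h := pow_le_pow_left₀ (by linarith : (0:ℝ) ≤ k + 1) hkub 3
      have h2 : (3.5 * b) ^ 3 = 42.875 * b ^ 3 := by ring
      linarith
    have hbub : b ≤ 2.9 * m := by
      nlinarith [mul_le_mul_of_nonneg_left hl2a.le hbpos.le, hbl]
    have hb3 : b ^ 3 ≤ 24.389 * m ^ 3 := by
      have h := pow_le_pow_left₀ hbpos.le hbub 3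
      have h2 : (2.9 * m) ^ 3 = 24.389 * m ^ 3 := by ring
      linarith
    have hm069 : 0.6931 ≤ m := by linarith
    have hm3 : 0.48 * m ≤ m ^ 3 := by
      nlinarith [hm069, hmpos.le, mul_le_mul_of_nonneg_left hm069 hmpos.le]
    have key : 42.875 * b ^ 3 + 4 * b ≤ 2000 * m ^ 3 := by
      linarith [hb3, hbub, hm3, hmpos.le]
    calc ∑ ℓ ∈ Finset.range (L + 1), (Nfun ε ℓ : ℝ) * 2 ^ ℓ
        ≤ (k + 1) ^ 3 * x + 2 ^ (L + 1) := hsumub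
      _ ≤ 42.875 * b ^ 3 * x + 4 * x * b := by
          have h6 := mul_le_mul_of_nonneg_right hk3 hx0.le
          nlinarith [h6, hp2]
      _ ≤ 2000 * x * m ^ 3 := by
          have h7 := mul_le_mul_of_nonneg_right key hx0.le
          nlinarith [h7]
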